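/- For every natural number n ≥ 0, the n-th Bernoulli number Bₙ (with the convention B₁ = 1/2, i.e. Bₙ = Bₙ(0) for the Bernoulli polynomials with Bₙ(x+1) − Bₙ(x) = n x^{n−1} and B₁(0) = 1/2) satisfies Kronecker's formula: Bₙ = − Σ_{j=1}^{n+1} ((−1)^j / j) · C(n+1, j) · Σ_{k=1}^{j} k^n, where C(n+1, j) denotes the binomial coefficient. -/

import Mathlib

/-!
Faulhaber's formula gives `∑_{k=1}^{j} k^n = j · P(j)` for a polynomial `P` of degree `n` with
constant term `Bₙ`. The `(n+1)`-st finite difference of `P` vanishes, i.e.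
`∑_{j=0}^{n+1} (-1)^j C(n+1, j) P(j) = 0`, so the sum over `j ≥ 1` equals `-P(0) = -Bₙ`.
-/

open Finset

theorem sum_neg_one_pow_mul_choose_mul_eq_zero_of_eq_sum_pow {R : Type*} [CommRing R] {N : ℕ}
    {P : R → R} (c : ℕ → R) (hP : ∀ x, P x = ∑ k ∈ range N, c k * x ^ k) :
    ∑ j ∈ range (N + 1), (-1) ^ j * N.choose j * P j = 0 := by
  have h := congr_fun (fwdDiff_iter_sum_mul_pow_eq_zero (n := N) c) 0
  simp only [fwdDiff_iter_eq_sum_shift, zero_add, nsmul_eq_mul, mul_one, zsmul_eq_mul,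
    Int.cast_mul, Int.cast_pow, Int.cast_neg, Int.cast_one, Int.cast_natCast, Pi.zero_apply,
    ← hP] at h
  calc _ = (-1) ^ N * ∑ j ∈ range (N + 1), (-1) ^ (N - j) * N.choose j * P j := by
        rw [mul_sum]
        refine sum_congr rfl fun j hj => ?_
        rw [← mul_assoc, ← mul_assoc, ← pow_add,
          show N + (N - j) = j + 2 * (N - j) by grind, pow_add, pow_mul]
        simp
    _ = 0 := by rw [h, mul_zero]

noncomputable def faulhaberQuotient (n : ℕ) (x : ℚ) : ℚ :=
  ∑ i ∈ range (n + 1), bernoulli' (n - i) * (n + 1).choose (n - i) / (n + 1) * x ^ i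

theorem sum_Icc_pow_eq_mul_faulhaberQuotient (n j : ℕ) :
    ∑ k ∈ Icc 1 j, (k : ℚ) ^ n = j * faulhaberQuotient n j := by
  rw [← Ico_add_one_right_eq_Icc, sum_Ico_pow, ← sum_range_reflect, faulhaberQuotient, mul_sum]
  refine sum_congr rfl fun i hi => ?_
  rw [show n + 1 - (n + 1 - 1 - i) = i + 1 by grind, add_tsub_cancel_right]
  ring

theorem faulhaberQuotient_zero (n : ℕ) : faulhaberQuotient n 0 = bernoulli' n := by
  have : (n : ℚ) + 1 ≠ 0 := by positivity
  simp [faulhaberQuotient, sum_range_succ', this]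

theorem sum_Icc_neg_one_pow_mul_choose_mul_faulhaberQuotient (n : ℕ) :
    ∑ j ∈ Icc 1 (n + 1), (-1 : ℚ) ^ j * (n + 1).choose j * faulhaberQuotient n j =
      -bernoulli' n := by
  have h := sum_neg_one_pow_mul_choose_mul_eq_zero_of_eq_sum_pow
    (P := faulhaberQuotient n) _ fun _ ↦ rfl
  rw [range_eq_Ico, sum_eq_sum_Ico_succ_bot (by omega), Ico_add_one_right_eq_Icc] at h
  simp only [pow_zero, Nat.choose_zero_right, Nat.cast_one, one_mul, Nat.cast_zero,
    faulhaberQuotient_zero, zero_add] at h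
  linear_combination h

/-- Kronecker's formula for the Bernoulli numbers (convention
`B₁ = +1/2`, i.e. Mathlib's `bernoulli'`):
`Bₙ = − ∑_{j=1}^{n+1} ((−1)^j / j) ⬝ C(n+1, j) ⬝ ∑_{k=1}^{j} k^n`. -/
theorem stmt_3 (n : ℕ) :
    bernoulli' n =
      -∑ j ∈ Finset.Icc 1 (n + 1),
        ((-1 : ℚ) ^ j / (j : ℚ)) * ((n + 1).choose j : ℚ) *
          ∑ k ∈ Finset.Icc 1 j, (k : ℚ) ^ n := by
  have hterm : ∀ j ∈ Icc 1 (n + 1), ((-1 : ℚ) ^ j / j) * (n + 1).choose j *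
      ∑ k ∈ Icc 1 j, (k : ℚ) ^ n = (-1) ^ j * (n + 1).choose j * faulhaberQuotient n j := by
    intro j hj
    have hj0 : (j : ℚ) ≠ 0 := Nat.cast_ne_zero.mpr (Nat.one_le_iff_ne_zero.mp (mem_Icc.mp hj).1)
    rw [sum_Icc_pow_eq_mul_faulhaberQuotient]
    field_simp
  rw [sum_congr rfl hterm, sum_Icc_neg_one_pow_mul_choose_mul_faulhaberQuotient, neg_neg]
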